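/- The curve CL2 defined by Q2(x,y,z) = (x^2+y^2-25z^2)(x+4z)·x·(x-4z)(y-3z)(y+3z)(3x-4y) has exactly 6 ordinary double points, 3 ordinary triple points, and 2 ordinary quadruple points, and no singular points of multiplicity at least 5. -/

import Mathlib

open MvPolynomial

noncomputable def conic : MvPolynomial (Fin 3) ℂ :=
  X 0 ^ 2 + X 1 ^ 2 - 25 * X 2 ^ 2

/-- The seven irreducible components of CL2: the smooth conic and six lines. -/
noncomputable def comps2 : Fin 7 → MvPolynomial (Fin 3) ℂ :=
  ![conic, X 0 + 4 * X 2, X 0, X 0 - 4 * X 2, X 1 - 3 * X 2, X 1 + 3 * X 2,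
    3 * X 0 - 4 * X 1]

/-- The number of components of CL2 passing through a projective point. -/
noncomputable def mult2 (p : Projectivization ℂ (Fin 3 → ℂ)) : ℕ :=
  (Finset.univ.filter fun i : Fin 7 => eval p.rep (comps2 i) = 0).card

/-- Gradient of a polynomial at a point. -/
noncomputable def grad (f : MvPolynomial (Fin 3) ℂ) (p : Fin 3 → ℂ) : Fin 3 → ℂ :=
  fun k => eval p (pderiv k f)

/-!
Every point lying on two components is one of eleven explicit points with integer
coordinates. Two distinct lines meet at the cross product of their coefficient vectors, and
restricted to any of the six lines the conic equation factors into two linear forms, which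
reduces conic–line intersections to line–line ones. Multiplicities, distinctness and
transversality at the eleven points are then finite computations with integer vectors
(transversality of two components is non-vanishing of the cross product of their gradients).
-/

open Matrix Finset Projectivization
open scoped LinearAlgebra.Projectivization

theorem MvPolynomial.pderiv_ofNat {σ R : Type*} [CommSemiring R] (i : σ) (n : ℕ)
    [n.AtLeastTwo] : pderiv i (no_index (OfNat.ofNat n : MvPolynomial σ R)) = 0 := by
  rw [← Nat.cast_ofNat]
  exact (pderiv i).map_natCast n

theorem intCast_comp_ne_zero {R ι : Type*} [AddGroupWithOne R] [CharZero R] {w : ι → ℤ}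
    (hw : w ≠ 0) : (Int.cast ∘ w : ι → R) ≠ 0 :=
  fun h => hw (Int.cast_injective.comp_left (h.trans (by simp)))

theorem intCast_comp_crossProduct {R : Type*} [CommRing R] (u v : Fin 3 → ℤ) :
    (Int.cast ∘ u : Fin 3 → R) ⨯₃ (Int.cast ∘ v) = Int.cast ∘ (u ⨯₃ v) := by
  ext i
  fin_cases i <;> simp [cross_apply]

theorem Projectivization.mk_eq_mk_crossProduct_of_dotProduct_eq_zero {F : Type*} [Field F]
    {a b v : Fin 3 → F} (hv : v ≠ 0) (hab : a ⨯₃ b ≠ 0) (ha : a ⬝ᵥ v = 0) (hb : b ⬝ᵥ v = 0) :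
    mk F v hv = mk F (a ⨯₃ b) hab := by
  rw [mk_eq_mk_iff_crossProduct_eq_zero, cross_cross_eq_smul_sub_smul', dotProduct_comm v b,
    ha, hb, zero_smul, zero_smul, sub_zero]

def lineCoeffs : Fin 6 → Fin 3 → ℤ :=
  ![![1, 0, 4], ![1, 0, 0], ![1, 0, -4], ![0, 1, -3], ![0, 1, 3], ![3, -4, 0]]

section Components

variable {R : Type*} [CommRing R]

def conicForm (v : Fin 3 → R) : R :=
  v 0 ^ 2 + v 1 ^ 2 - 25 * v 2 ^ 2

def compVal (v : Fin 3 → R) : Fin 7 → R :=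
  vecCons (conicForm v) fun l => (Int.cast ∘ lineCoeffs l) ⬝ᵥ v

def gradVal (v : Fin 3 → R) : Fin 7 → Fin 3 → R :=
  vecCons ![2 * v 0, 2 * v 1, -50 * v 2] fun l => Int.cast ∘ lineCoeffs l

def compMult [DecidableEq R] (v : Fin 3 → R) : ℕ :=
  #{i | compVal v i = 0}

theorem compVal_intCast (w : Fin 3 → ℤ) (i : Fin 7) :
    compVal (Int.cast ∘ w : Fin 3 → R) i = compVal w i := by
  cases i using Fin.cases <;> simp [compVal, conicForm, dotProduct]

theorem gradVal_intCast (w : Fin 3 → ℤ) (i : Fin 7) :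
    gradVal (Int.cast ∘ w : Fin 3 → R) i = Int.cast ∘ gradVal w i := by
  ext m
  cases i using Fin.cases
  · fin_cases m <;> simp [gradVal]
  · simp [gradVal]

theorem gradVal_smul (c : R) (v : Fin 3 → R) (i : Fin 7) :
    gradVal (c • v) i = (vecCons c 1 : Fin 7 → R) i • gradVal v i := by
  cases i using Fin.cases
  · ext m
    fin_cases m <;> simp [gradVal, mul_left_comm]
  · simp [gradVal]

end Components

theorem compVal_smul_eq_zero_iff {F : Type*} [Field F] {c : F} (hc : c ≠ 0) (v : Fin 3 → F)
    (i : Fin 7) : compVal (c • v) i = 0 ↔ compVal v i = 0 := by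
  cases i using Fin.cases
  · have : conicForm (c • v) = c ^ 2 * conicForm v := by
      simp only [conicForm, Pi.smul_apply, smul_eq_mul]; ring
    simp [compVal, this, hc]
  · simp [compVal, hc]

theorem eval_comps2 (v : Fin 3 → ℂ) (i : Fin 7) : eval v (comps2 i) = compVal v i := by
  cases i using Fin.cases with
  | zero => simp [comps2, compVal, conic, conicForm]
  | succ l =>
    fin_cases l <;>
      simp [comps2, compVal, lineCoeffs, vec3_dotProduct, mul_comm, sub_eq_add_neg]

theorem grad_comps2 (v : Fin 3 → ℂ) (i : Fin 7) : grad (comps2 i) v = gradVal v i := by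
  ext m
  cases i using Fin.cases with
  | zero =>
    fin_cases m <;> simp [grad, comps2, gradVal, conic, pderiv_X, pderiv_ofNat]
    ring
  | succ l =>
    fin_cases l <;> fin_cases m <;>
      simp [grad, comps2, gradVal, lineCoeffs, pderiv_X, pderiv_ofNat]

theorem mult2_mk (v : Fin 3 → ℂ) (hv : v ≠ 0) : mult2 (mk ℂ v hv) = compMult v := by
  obtain ⟨c, hc⟩ := exists_smul_eq_mk_rep ℂ v hv
  simp only [mult2, compMult, ← hc, eval_comps2, Units.smul_def,
    compVal_smul_eq_zero_iff c.ne_zero]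

noncomputable def intPoint (w : Fin 3 → ℤ) (hw : w ≠ 0) : ℙ ℂ (Fin 3 → ℂ) :=
  mk ℂ (Int.cast ∘ w) (intCast_comp_ne_zero hw)

theorem intPoint_eq_intPoint_iff {u w : Fin 3 → ℤ} (hu : u ≠ 0) (hw : w ≠ 0) :
    intPoint u hu = intPoint w hw ↔ u ⨯₃ w = 0 := by
  rw [intPoint, intPoint, mk_eq_mk_iff_crossProduct_eq_zero, intCast_comp_crossProduct,
    ← (Int.cast_injective (α := ℂ)).comp_left.eq_iff]
  simp

def singularCoords : Fin 11 → Fin 3 → ℤ :=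
  ![![0, 1, 0], ![-4, 3, 1], ![4, -3, 1], ![4, 3, 1], ![-4, -3, 1], ![1, 0, 0], ![0, 0, 1],
    ![0, 5, 1], ![0, -5, 1], ![0, 3, 1], ![0, -3, 1]]

theorem singularCoords_ne_zero (k : Fin 11) : singularCoords k ≠ 0 := by
  revert k
  decide

noncomputable def singularPoint (k : Fin 11) : ℙ ℂ (Fin 3 → ℂ) :=
  intPoint (singularCoords k) (singularCoords_ne_zero k)

theorem singularPoint_injective : Function.Injective singularPoint := by
  intro k l h
  rw [singularPoint, singularPoint, intPoint_eq_intPoint_iff] at h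
  revert k l h
  decide

theorem mult2_singularPoint (k : Fin 11) :
    mult2 (singularPoint k) = compMult (singularCoords k) := by
  simp only [singularPoint, intPoint, mult2_mk, compMult, compVal_intCast, Int.cast_eq_zero]

theorem mk_eq_singularPoint_of_dotProduct_eq_zero {a b : Fin 3 → ℤ} {k : Fin 11}
    (hab : a ⨯₃ b ≠ 0) (hk : a ⨯₃ b ⨯₃ singularCoords k = 0) {v : Fin 3 → ℂ} (hv : v ≠ 0)
    (ha : (Int.cast ∘ a) ⬝ᵥ v = 0) (hb : (Int.cast ∘ b) ⬝ᵥ v = 0) :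
    mk ℂ v hv = singularPoint k := by
  have hab' := intCast_comp_crossProduct (R := ℂ) a b ▸ intCast_comp_ne_zero hab
  calc mk ℂ v hv = intPoint (a ⨯₃ b) hab := by
        simp only [mk_eq_mk_crossProduct_of_dotProduct_eq_zero hv hab' ha hb, intPoint,
          intCast_comp_crossProduct]
    _ = singularPoint k := (intPoint_eq_intPoint_iff hab _).2 hk

/-- On the line `lineCoeffs l` the conic form is a nonzero multiple of the product of the
forms `conicSplit l 0` and `conicSplit l 1`, e.g.
`x² + y² - 25z² = (x + 4z)(x - 4z) + (y - 3z)(y + 3z)` and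
`25 (x² + y² - 25z²) = (3x - 4y)² + (4x + 3y - 25z)(4x + 3y + 25z)`. -/
def conicSplit : Fin 6 → Fin 2 → Fin 3 → ℤ :=
  ![![![0, 1, -3], ![0, 1, 3]], ![![0, 1, -5], ![0, 1, 5]], ![![0, 1, -3], ![0, 1, 3]],
    ![![1, 0, -4], ![1, 0, 4]], ![![1, 0, -4], ![1, 0, 4]], ![![4, 3, -25], ![4, 3, 25]]]

theorem exists_conicSplit_dotProduct_eq_zero (l : Fin 6) {v : Fin 3 → ℂ}
    (hc : conicForm v = 0) (hl : (Int.cast ∘ lineCoeffs l) ⬝ᵥ v = 0) :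
    ∃ s, (Int.cast ∘ conicSplit l s) ⬝ᵥ v = 0 := by
  have : ((Int.cast ∘ conicSplit l 0) ⬝ᵥ v) * ((Int.cast ∘ conicSplit l 1) ⬝ᵥ v) = 0 := by
    fin_cases l <;>
      simp only [conicForm, lineCoeffs, conicSplit, vec3_dotProduct, Function.comp_apply,
        Matrix.cons_val, Int.cast_zero, Int.cast_one, Int.cast_ofNat, Int.cast_neg, Fin.zero_eta,
        Fin.mk_one, Fin.reduceFinMk] at hc hl ⊢ <;>
      grind
  obtain h | h := mul_eq_zero.1 this
  exacts [⟨0, h⟩, ⟨1, h⟩]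

theorem exists_eq_singularPoint_of_compVal_eq_zero {v : Fin 3 → ℂ} (hv : v ≠ 0) {i j : Fin 7}
    (hij : i ≠ j) (hi : compVal v i = 0) (hj : compVal v j = 0) :
    ∃ k, mk ℂ v hv = singularPoint k := by
  have conic_line (l : Fin 6) (hc : conicForm v = 0)
      (hl : (Int.cast ∘ lineCoeffs l) ⬝ᵥ v = 0) : ∃ k, mk ℂ v hv = singularPoint k := by
    obtain ⟨s, hs⟩ := exists_conicSplit_dotProduct_eq_zero l hc hl
    have hmeet : ∀ l s, lineCoeffs l ⨯₃ conicSplit l s ≠ 0 ∧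
        ∃ k, lineCoeffs l ⨯₃ conicSplit l s ⨯₃ singularCoords k = 0 := by
      decide
    obtain ⟨hne, k, hk⟩ := hmeet l s
    exact ⟨k, mk_eq_singularPoint_of_dotProduct_eq_zero hne hk hv hl hs⟩
  cases i using Fin.cases <;> cases j using Fin.cases
  case zero.zero => exact absurd rfl hij
  case zero.succ l => exact conic_line l hi hj
  case succ.zero l => exact conic_line l hj hi
  case succ.succ l l' =>
    have hmeet : ∀ l l' : Fin 6, l ≠ l' → lineCoeffs l ⨯₃ lineCoeffs l' ≠ 0 ∧
        ∃ k, lineCoeffs l ⨯₃ lineCoeffs l' ⨯₃ singularCoords k = 0 := by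
      decide
    obtain ⟨hne, k, hk⟩ := hmeet l l' (ne_of_apply_ne Fin.succ hij)
    exact ⟨k, mk_eq_singularPoint_of_dotProduct_eq_zero hne hk hv hi hj⟩

theorem exists_eq_singularPoint {p : ℙ ℂ (Fin 3 → ℂ)} (hp : 2 ≤ mult2 p) :
    ∃ k, p = singularPoint k := by
  rw [← mk_rep p, mult2_mk, compMult, Nat.succ_le_iff, one_lt_card] at hp
  obtain ⟨i, hi, j, hj, hij⟩ := hp
  rw [mem_filter] at hi hj
  rw [← mk_rep p]
  exact exists_eq_singularPoint_of_compVal_eq_zero _ hij hi.2 hj.2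

theorem setOf_mult2_eq {n : ℕ} (hn : 2 ≤ n) :
    {p | mult2 p = n} = singularPoint '' {k | compMult (singularCoords k) = n} := by
  ext p
  constructor
  · intro hp
    obtain ⟨k, rfl⟩ := exists_eq_singularPoint (hn.trans_eq hp.symm)
    exact ⟨k, (mult2_singularPoint k).symm.trans hp, rfl⟩
  · rintro ⟨k, hk, rfl⟩
    exact (mult2_singularPoint k).trans hk

theorem ncard_setOf_mult2_eq {n : ℕ} (hn : 2 ≤ n) :
    {p | mult2 p = n}.ncard = #{k | compMult (singularCoords k) = n} := by
  rw [setOf_mult2_eq hn, Set.ncard_image_of_injective _ singularPoint_injective,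
    Set.ncard_eq_toFinset_card', Set.toFinset_ofPred]

theorem mult2_le_four (p : ℙ ℂ (Fin 3 → ℂ)) : mult2 p ≤ 4 := by
  by_cases hp : 2 ≤ mult2 p
  · obtain ⟨k, rfl⟩ := exists_eq_singularPoint hp
    rw [mult2_singularPoint]
    exact (by decide : ∀ k, compMult (singularCoords k) ≤ 4) k
  · omega

theorem linearIndependent_gradVal {v : Fin 3 → ℂ} (hv : v ≠ 0) {i j : Fin 7} (hij : i ≠ j)
    (hi : compVal v i = 0) (hj : compVal v j = 0) :
    LinearIndependent ℂ ![gradVal v i, gradVal v j] := by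
  obtain ⟨k, hk⟩ := exists_eq_singularPoint_of_compVal_eq_zero hv hij hi hj
  obtain ⟨c, rfl⟩ : ∃ c : ℂˣ, v = c • (Int.cast ∘ singularCoords k) := by
    rw [singularPoint, intPoint, mk_eq_mk_iff] at hk
    exact hk.imp fun c hc => hc.symm
  rw [Units.smul_def] at hi hj ⊢
  rw [compVal_smul_eq_zero_iff c.ne_zero, compVal_intCast, Int.cast_eq_zero] at hi hj
  have hscale : ∀ i : Fin 7, (vecCons (c : ℂ) 1 : Fin 7 → ℂ) i ≠ 0 :=
    Fin.cases c.ne_zero fun _ => one_ne_zero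
  have hcross : ∀ k i j, i ≠ j → compVal (singularCoords k) i = 0 →
      compVal (singularCoords k) j = 0 →
      gradVal (singularCoords k) i ⨯₃ gradVal (singularCoords k) j ≠ 0 := by
    decide
  rw [← crossProduct_ne_zero_iff_linearIndependent, gradVal_smul, gradVal_smul, gradVal_intCast,
    gradVal_intCast]
  simp only [map_smul, LinearMap.smul_apply, intCast_comp_crossProduct, ne_eq, smul_eq_zero,
    hscale, false_or]
  exact intCast_comp_ne_zero (hcross k i j hij hi hj)

/-- CL2 has exactly 6 ordinary double points, 3 ordinary triple points, 2 ordinary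
quadruple points, and no singular point of multiplicity at least 5; moreover any two
components meet transversally at every common point. -/
theorem stmt_13 :
    {p : Projectivization ℂ (Fin 3 → ℂ) | mult2 p = 2}.ncard = 6 ∧
    {p : Projectivization ℂ (Fin 3 → ℂ) | mult2 p = 3}.ncard = 3 ∧
    {p : Projectivization ℂ (Fin 3 → ℂ) | mult2 p = 4}.ncard = 2 ∧
    (∀ p : Projectivization ℂ (Fin 3 → ℂ), mult2 p ≤ 4) ∧
    (∀ p : Projectivization ℂ (Fin 3 → ℂ), ∀ i j : Fin 7, i ≠ j →
      eval p.rep (comps2 i) = 0 → eval p.rep (comps2 j) = 0 →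
      LinearIndependent ℂ ![grad (comps2 i) p.rep, grad (comps2 j) p.rep]) := by
  refine ⟨?_, ?_, ?_, mult2_le_four, ?_⟩
  · rw [ncard_setOf_mult2_eq le_rfl]
    decide
  · rw [ncard_setOf_mult2_eq (by norm_num)]
    decide
  · rw [ncard_setOf_mult2_eq (by norm_num)]
    decide
  · intro p i j hij hi hj
    rw [eval_comps2] at hi hj
    rw [grad_comps2, grad_comps2]
    exact linearIndependent_gradVal p.rep_nonzero hij hi hj
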